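/- Let (X, λ) be a convergence approach space and define cl A := C(θ_A) (the closure function of A). Then: (1) cl ∅ = θ_∅ (constant 0); (2) A ⊆ B implies cl A ≤ cl B; (3) cl(A ∪ B) = cl A ∨ cl B (pointwise sup); (4) cl({x : cl A(x) = 1}) = cl A. -/

import Mathlib

open Filter Set
open scoped ENNReal

noncomputable section
attribute [local instance] Classical.propDecidable

instance : Fact ((0:ℝ) ≤ 1) := ⟨zero_le_one⟩

/-- The value quantale `V = [0,1]` with multiplication. -/
abbrev V := unitInterval

/-- Residuation `t ⊘ x` on `[0,1]`: `min (t/x) 1` if `x ≠ 0`, and `1` if `x = 0`. -/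
def oslash (t x : V) : V :=
  if x = 0 then 1
  else ⟨min (t.1 / x.1) 1, ⟨le_min (div_nonneg t.2.1 x.2.1) zero_le_one, min_le_right _ _⟩⟩

/-- The grill of a filter: sets meeting every member of the filter. -/
def grill {X : Type*} (F : Filter X) : Set (Set X) := {B | ∀ S ∈ F, (B ∩ S).Nonempty}

/-- `limsup` of a `V`-valued function along a family of sets. -/
def limsupF {X : Type*} (F : Set (Set X)) (f : X → V) : V := ⨅ s ∈ F, ⨆ t ∈ s, f t

/-- `liminf` of a `V`-valued function along a family of sets. -/
def liminfF {X : Type*} (F : Set (Set X)) (f : X → V) : V := ⨆ s ∈ F, ⨅ t ∈ s, f t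

/-- A convergence approach space structure on `X`, valued in `V = [0,1]`:
`lam F x` measures how well `F` converges to `x` (1 = full convergence);
finer filters converge better, and principal ultrafilters fully converge. -/
structure CAS (X : Type*) where
  lam : Filter X → X → V
  mono : ∀ ⦃F G : Filter X⦄, F ≤ G → lam G ≤ lam F
  centered : ∀ x : X, lam (pure x) x = 1

/-- The standard approach structure on `V`. -/
def lamV (F : Filter V) (v : V) : V := oslash v (⨆ A ∈ grill F, sInf A)

/-- `f : X → V` is a contraction into `(V, λ_V)` (characterized pointwise). -/
def Contr {X : Type*} (Λ : CAS X) (f : X → V) : Prop :=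
  ∀ (F : Filter X) (x : X), Λ.lam F x ≤ oslash (f x) (limsupF F.sets f)

/-- Indicator function of a set, valued in `V`. -/
def theta {X : Type*} (A : Set X) : X → V := fun x => if x ∈ A then 1 else 0

/-- The lower-hull operator: the smallest contraction above `f`. -/
def Cop {X : Type*} (Λ : CAS X) (f : X → V) : X → V :=
  sInf {g : X → V | Contr Λ g ∧ f ≤ g}

/-- The adherence function of a set `A`. -/
def adhSet {X : Type*} (Λ : CAS X) (A : Set X) : X → V :=
  fun x => ⨆ (U : Ultrafilter X) (_ : A ∈ U), Λ.lam U x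

/-- The adherence function of a filter. -/
def adhFilter {X : Type*} (Λ : CAS X) (F : Filter X) : X → V :=
  fun x => ⨆ (U : Ultrafilter X) (_ : (U : Filter X) ≤ F), Λ.lam U x

/-- Adherence in `(V, λ_V)` of a subset of `V`. -/
def adhV (A : Set V) (v : V) : V := ⨆ (U : Ultrafilter V) (_ : A ∈ U), lamV U v

/-! Contractions into `(V, λ_V)` are closed under pointwise infima and binary suprema: by
residuation, `λ ≤ f ⊘ d` means `λ · d ≤ f`, and `limsup` commutes with `⊔` in the linear order
`V`. Hence `C` is a closure operator that preserves `⊔` and fixes the contraction `0`. With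
`θ_{A ∪ B} = θ_A ∨ θ_B` and `θ_A ≤ g ↔ g = 1 on A`, the four properties follow. -/

lemma le_oslash_iff {z t x : V} : z ≤ oslash t x ↔ z * x ≤ t := by
  unfold oslash
  split_ifs with hx
  · simp [hx, unitInterval.le_one']
  · have hx : (0 : ℝ) < x := unitInterval.pos_iff_ne_zero.2 hx
    rw [← Subtype.coe_le_coe, Subtype.coe_mk, le_min_iff, le_div_iff₀ hx]
    exact and_iff_left z.2.2

section Contraction

variable {X : Type*} {Λ : CAS X} {f g : X → V}

lemma limsupF_eq_limsup (F : Filter X) (f : X → V) : limsupF F.sets f = limsup f F :=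
  limsup_eq_iInf_iSup.symm

lemma contr_iff_mul_limsupF_le : Contr Λ f ↔ ∀ F x, Λ.lam F x * limsupF F.sets f ≤ f x := by
  simp only [Contr, le_oslash_iff]

lemma contr_bot : Contr Λ (⊥ : X → V) := by
  refine contr_iff_mul_limsupF_le.2 fun F x => ?_
  rw [limsupF_eq_limsup, Pi.bot_def, limsup_const_bot]
  exact (mul_zero _).le

lemma contr_sInf {S : Set (X → V)} (hS : ∀ g ∈ S, Contr Λ g) : Contr Λ (sInf S) := by
  refine contr_iff_mul_limsupF_le.2 fun F x => ?_
  rw [sInf_apply]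
  refine le_iInf fun ⟨g, hg⟩ => ?_
  calc Λ.lam F x * limsupF F.sets (sInf S)
      ≤ Λ.lam F x * limsupF F.sets g := by
        gcongr
        simp only [limsupF_eq_limsup]
        exact limsup_le_limsup (Eventually.of_forall fun y => (sInf_le hg : sInf S ≤ g) y)
    _ ≤ g x := contr_iff_mul_limsupF_le.1 (hS g hg) F x

lemma Contr.sup (hf : Contr Λ f) (hg : Contr Λ g) : Contr Λ (f ⊔ g) := by
  refine contr_iff_mul_limsupF_le.2 fun F x => ?_
  calc Λ.lam F x * limsupF F.sets (f ⊔ g)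
      = Λ.lam F x * limsupF F.sets f ⊔ Λ.lam F x * limsupF F.sets g := by
        simp only [limsupF_eq_limsup]
        rw [← mul_max]
        exact congrArg _ limsup_max
    _ ≤ f x ⊔ g x := sup_le_sup (contr_iff_mul_limsupF_le.1 hf F x) (contr_iff_mul_limsupF_le.1 hg F x)

lemma le_Cop : f ≤ Cop Λ f := le_sInf fun _ hg => hg.2

lemma Cop_le (hg : Contr Λ g) (hfg : f ≤ g) : Cop Λ f ≤ g := sInf_le ⟨hg, hfg⟩

lemma contr_Cop : Contr Λ (Cop Λ f) := contr_sInf fun _ hg => hg.1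

lemma Cop_eq_self (hf : Contr Λ f) : Cop Λ f = f := le_antisymm (Cop_le hf le_rfl) le_Cop

lemma Cop_mono (hfg : f ≤ g) : Cop Λ f ≤ Cop Λ g := Cop_le contr_Cop (hfg.trans le_Cop)

lemma Cop_sup : Cop Λ (f ⊔ g) = Cop Λ f ⊔ Cop Λ g :=
  le_antisymm (Cop_le (contr_Cop.sup contr_Cop) (sup_le_sup le_Cop le_Cop))
    (sup_le (Cop_mono le_sup_left) (Cop_mono le_sup_right))

end Contraction

section Indicator

variable {X : Type*} {A B : Set X}

lemma theta_empty : theta (∅ : Set X) = ⊥ := by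
  ext x
  simp [theta]

lemma theta_union : theta (A ∪ B) = theta A ⊔ theta B := by
  ext x
  by_cases hA : x ∈ A <;> by_cases hB : x ∈ B <;> simp [theta, hA, hB]

lemma theta_le_iff {g : X → V} : theta A ≤ g ↔ ∀ x ∈ A, g x = 1 := by
  refine forall_congr' fun x => ?_
  by_cases hx : x ∈ A <;> simp [theta, hx, unitInterval.le_one'.ge_iff_eq', eq_comm]

lemma theta_mono (hAB : A ⊆ B) : theta A ≤ theta B :=
  theta_le_iff.2 fun _ hx => if_pos (hAB hx)

end Indicator

/-- the closure function `cl A := C(θ_A)` satisfies: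
(1) `cl ∅ = θ_∅`; (2) `A ⊆ B → cl A ≤ cl B`; (3) `cl (A ∪ B) = cl A ∨ cl B`;
(4) `cl {x : cl A x = 1} = cl A`. -/
theorem stmt18 {X : Type*} (Λ : CAS X) :
    Cop Λ (theta (∅ : Set X)) = theta (∅ : Set X) ∧
    (∀ A B : Set X, A ⊆ B → Cop Λ (theta A) ≤ Cop Λ (theta B)) ∧
    (∀ A B : Set X, Cop Λ (theta (A ∪ B)) = Cop Λ (theta A) ⊔ Cop Λ (theta B)) ∧
    (∀ A : Set X, Cop Λ (theta {x : X | Cop Λ (theta A) x = 1}) = Cop Λ (theta A)) := by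
  refine ⟨theta_empty ▸ Cop_eq_self contr_bot, fun A B hAB => Cop_mono (theta_mono hAB),
    fun A B => by rw [theta_union, Cop_sup], fun A => le_antisymm ?_ ?_⟩
  · exact Cop_le contr_Cop (theta_le_iff.2 fun _ hx => hx)
  · exact Cop_mono (theta_mono fun x hx => theta_le_iff.1 le_Cop x hx)
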